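/- (Proposition 1, adversarial Z loss.) Let μ be a Borel probability measure on ℝ^{d_Z} (the prior P_Z), let G : ℝ^{d_Z} → ℝ^{d_X} (generator) and E : ℝ^{d_X} → ℝ^{d_Z} (encoder) be Borel measurable. Let P = P_{Z,G(Z)} be the pushforward of μ under z ↦ (G(z), z) and Q = P_{E(G(Z)),G(Z)} the pushforward of μ under z ↦ (G(z), E(G(z))), both probability measures on ℝ^{d_X} × ℝ^{d_Z}. Then the discriminator D* = dP/d(P+Q), the Radon–Nikodym derivative of P with respect to P + Q, minimizes the adversarial Z loss L_Z(E,G,D) = ∫ (−log D) dP + ∫ (−log(1−D)) dQ over all measurable D : ℝ^{d_X} × ℝ^{d_Z} → [0,1]: for every such D, L_Z(E,G,D*) ≤ L_Z(E,G,D). -/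

import Mathlib

/-!
With `f = dP/d(P+Q)` one has `dQ/d(P+Q) = 1 - f`, so the loss of any `D` is the `(P+Q)`-integral
of the binary cross entropy `f·(-log D) + (1-f)·(-log (1-D))`. Pointwise this is minimised at
`D = f` by Gibbs' inequality, which for two points follows from `log t ≤ t - 1`.
-/

open MeasureTheory ENNReal

/-- `-log x` for `x ∈ [0,1] ⊆ ℝ≥0∞`, valued in `[0, ∞]`, with the convention
`log 0 = -∞`, i.e. `-log 0 = ∞`. -/
noncomputable def negLog (x : ℝ≥0∞) : ℝ≥0∞ :=
  if x = 0 then ∞ else ENNReal.ofReal (-Real.log x.toReal)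

open Real in
lemma mul_log_sub_mul_log_le {a d : ℝ} (ha : 0 < a) (hd : 0 < d) :
    a * log d - a * log a ≤ d - a := by
  have h := log_le_sub_one_of_pos (div_pos hd ha)
  rw [log_div hd.ne' ha.ne'] at h
  calc a * log d - a * log a = a * (log d - log a) := by ring
    _ ≤ a * (d / a - 1) := mul_le_mul_of_nonneg_left h ha.le
    _ = d - a := by field_simp

open Real in
lemma mul_neg_log_add_mul_neg_log_le {a b d e : ℝ} (ha : 0 < a) (hb : 0 < b) (hd : 0 < d)
    (he : 0 < e) (h : d + e ≤ a + b) :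
    a * -log a + b * -log b ≤ a * -log d + b * -log e := by
  have hda := mul_log_sub_mul_log_le ha hd
  have heb := mul_log_sub_mul_log_le hb he
  linarith

lemma measurable_negLog : Measurable negLog :=
  Measurable.ite (measurableSet_singleton 0) measurable_const
    (ENNReal.measurable_ofReal.comp (Real.measurable_log.comp ENNReal.measurable_toReal).neg)

@[simp] lemma negLog_zero : negLog 0 = ∞ := if_pos rfl

@[simp] lemma negLog_one : negLog 1 = 0 := by simp [negLog]

lemma negLog_ofReal {x : ℝ} (hx : 0 < x) :
    negLog (ENNReal.ofReal x) = ENNReal.ofReal (-Real.log x) := by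
  rw [negLog, if_neg (ENNReal.ofReal_pos.2 hx).ne', ENNReal.toReal_ofReal hx.le]

lemma mul_negLog_add_mul_negLog_le {a d : ℝ≥0∞} (ha : a ≤ 1) (hd : d ≤ 1) :
    a * negLog a + (1 - a) * negLog (1 - a) ≤ a * negLog d + (1 - a) * negLog (1 - d) := by
  -- at the boundary the left side vanishes or the right side is `∞`
  rcases eq_or_ne a 0 with rfl | ha0
  · simp
  rcases eq_or_lt_of_le ha with rfl | ha1
  · simp
  rcases eq_or_ne d 0 with rfl | hd0
  · simp [ENNReal.mul_top ha0]
  rcases eq_or_lt_of_le hd with rfl | hd1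
  · simp [ENNReal.mul_top (tsub_pos_of_lt ha1).ne']
  obtain ⟨A, hA0, rfl⟩ : ∃ A, 0 ≤ A ∧ a = ENNReal.ofReal A :=
    ⟨a.toReal, ENNReal.toReal_nonneg, (ENNReal.ofReal_toReal ha1.ne_top).symm⟩
  obtain ⟨D, hD0, rfl⟩ : ∃ D, 0 ≤ D ∧ d = ENNReal.ofReal D :=
    ⟨d.toReal, ENNReal.toReal_nonneg, (ENNReal.ofReal_toReal hd1.ne_top).symm⟩
  rw [ENNReal.ofReal_lt_one] at ha1 hd1
  replace hA0 : 0 < A := ENNReal.ofReal_pos.1 (pos_iff_ne_zero.2 ha0)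
  replace hD0 : 0 < D := ENNReal.ofReal_pos.1 (pos_iff_ne_zero.2 hd0)
  simp only [← ENNReal.ofReal_one, ← ENNReal.ofReal_sub _ hA0.le, ← ENNReal.ofReal_sub _ hD0.le]
  rw [negLog_ofReal hA0, negLog_ofReal hD0, negLog_ofReal (sub_pos.2 ha1),
    negLog_ofReal (sub_pos.2 hd1)]
  have h1A : 0 < 1 - A := sub_pos.2 ha1
  have h1D : 0 < 1 - D := sub_pos.2 hd1
  have hlogA := Real.log_nonpos hA0.le ha1.le
  have hlogD := Real.log_nonpos hD0.le hd1.le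
  have hlog1A := Real.log_nonpos h1A.le (by linarith)
  have hlog1D := Real.log_nonpos h1D.le (by linarith)
  simp only [← ENNReal.ofReal_mul hA0.le, ← ENNReal.ofReal_mul h1A.le]
  rw [← ENNReal.ofReal_add (mul_nonneg hA0.le (neg_nonneg.2 hlogA))
      (mul_nonneg h1A.le (neg_nonneg.2 hlog1A)),
    ← ENNReal.ofReal_add (mul_nonneg hA0.le (neg_nonneg.2 hlogD))
      (mul_nonneg h1A.le (neg_nonneg.2 hlog1D))]
  exact ENNReal.ofReal_le_ofReal
    (mul_neg_log_add_mul_neg_log_le hA0 h1A hD0 h1D (by linarith))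

section RadonNikodym

variable {α : Type*} [MeasurableSpace α] {P Q : Measure α} [SigmaFinite P] [SigmaFinite Q]

lemma rnDeriv_add_rnDeriv_eq_one :
    P.rnDeriv (P + Q) + Q.rnDeriv (P + Q) =ᵐ[P + Q] 1 :=
  (Measure.rnDeriv_add' P Q (P + Q)).symm.trans (Measure.rnDeriv_self (P + Q))

lemma rnDeriv_right_eq_one_sub_rnDeriv_left :
    Q.rnDeriv (P + Q) =ᵐ[P + Q] fun x ↦ 1 - P.rnDeriv (P + Q) x := by
  filter_upwards [rnDeriv_add_rnDeriv_eq_one] with x hx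
  exact ENNReal.eq_sub_of_add_eq (ne_top_of_le_ne_top one_ne_top (le_of_le_of_eq le_self_add hx))
    ((add_comm _ _).trans hx)

lemma rnDeriv_left_le_one : ∀ᵐ x ∂(P + Q), P.rnDeriv (P + Q) x ≤ 1 := by
  filter_upwards [rnDeriv_add_rnDeriv_eq_one] with x hx
  exact le_of_le_of_eq le_self_add hx

lemma lintegral_add_lintegral_eq_lintegral_rnDeriv {φ ψ : α → ℝ≥0∞} (hφ : Measurable φ)
    (hψ : Measurable ψ) :
    ∫⁻ x, φ x ∂P + ∫⁻ x, ψ x ∂Q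
      = ∫⁻ x, P.rnDeriv (P + Q) x * φ x + (1 - P.rnDeriv (P + Q) x) * ψ x ∂(P + Q) := by
  have hP : P ≪ P + Q := Measure.absolutelyContinuous_of_le (Measure.le_add_right le_rfl)
  have hQ : Q ≪ P + Q := Measure.absolutelyContinuous_of_le (Measure.le_add_left le_rfl)
  rw [lintegral_add_left (f := fun x ↦ P.rnDeriv (P + Q) x * φ x)
      ((Measure.measurable_rnDeriv _ _).mul hφ),
    lintegral_rnDeriv_mul hP hφ.aemeasurable, ← lintegral_rnDeriv_mul hQ hψ.aemeasurable]
  refine congrArg _ (lintegral_congr_ae ?_)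
  filter_upwards [rnDeriv_right_eq_one_sub_rnDeriv_left] with x hx
  rw [hx]

theorem lintegral_negLog_rnDeriv_le (D : α → ℝ≥0∞) (hD : Measurable D) (hD1 : ∀ x, D x ≤ 1) :
    ∫⁻ x, negLog (P.rnDeriv (P + Q) x) ∂P + ∫⁻ x, negLog (1 - P.rnDeriv (P + Q) x) ∂Q
      ≤ ∫⁻ x, negLog (D x) ∂P + ∫⁻ x, negLog (1 - D x) ∂Q := by
  have h_eq (g : α → ℝ≥0∞) (hg : Measurable g) :
      ∫⁻ x, negLog (g x) ∂P + ∫⁻ x, negLog (1 - g x) ∂Q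
        = ∫⁻ x, P.rnDeriv (P + Q) x * negLog (g x)
            + (1 - P.rnDeriv (P + Q) x) * negLog (1 - g x) ∂(P + Q) :=
    lintegral_add_lintegral_eq_lintegral_rnDeriv (measurable_negLog.comp hg)
      (measurable_negLog.comp (measurable_const.sub hg))
  rw [h_eq _ (Measure.measurable_rnDeriv P (P + Q)), h_eq D hD]
  refine lintegral_mono_ae ?_
  filter_upwards [rnDeriv_left_le_one] with x hx
  exact mul_negLog_add_mul_negLog_le hx (hD1 x)

end RadonNikodym

theorem adversarial_Z_optimal_discriminator_general
    (dZ dX : ℕ) (μ : Measure (EuclideanSpace ℝ (Fin dZ))) [IsProbabilityMeasure μ]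
    (G : EuclideanSpace ℝ (Fin dZ) → EuclideanSpace ℝ (Fin dX))
    (E : EuclideanSpace ℝ (Fin dX) → EuclideanSpace ℝ (Fin dZ))
    (P Q : Measure (EuclideanSpace ℝ (Fin dX) × EuclideanSpace ℝ (Fin dZ)))
    (hP : P = μ.map (fun z => (G z, z)))
    (hQ : Q = μ.map (fun z => (G z, E (G z))))
    (D : EuclideanSpace ℝ (Fin dX) × EuclideanSpace ℝ (Fin dZ) → ℝ≥0∞)
    (hD : Measurable D) (hD1 : ∀ x, D x ≤ 1) :
    ∫⁻ x, negLog (P.rnDeriv (P + Q) x) ∂P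
        + ∫⁻ x, negLog (1 - P.rnDeriv (P + Q) x) ∂Q
      ≤ ∫⁻ x, negLog (D x) ∂P + ∫⁻ x, negLog (1 - D x) ∂Q := by
  subst hP hQ
  exact lintegral_negLog_rnDeriv_le D hD hD1

/-- Proposition 1 (adversarial Z loss): with `P` the law of `(G(Z), Z)` and `Q` the law of
`(G(Z), E(G(Z)))` for `Z ∼ μ`, the discriminator `D* = dP/d(P+Q)` minimizes
`L_Z(E,G,D) = ∫ (-log D) dP + ∫ (-log (1-D)) dQ` over measurable `D` valued in `[0,1]`. -/
theorem adversarial_Z_optimal_discriminator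
    (dZ dX : ℕ) (μ : Measure (EuclideanSpace ℝ (Fin dZ))) [IsProbabilityMeasure μ]
    (G : EuclideanSpace ℝ (Fin dZ) → EuclideanSpace ℝ (Fin dX))
    (E : EuclideanSpace ℝ (Fin dX) → EuclideanSpace ℝ (Fin dZ))
    (hG : Measurable G) (hE : Measurable E)
    (P Q : Measure (EuclideanSpace ℝ (Fin dX) × EuclideanSpace ℝ (Fin dZ)))
    (hP : P = μ.map (fun z => (G z, z)))
    (hQ : Q = μ.map (fun z => (G z, E (G z))))
    (D : EuclideanSpace ℝ (Fin dX) × EuclideanSpace ℝ (Fin dZ) → ℝ≥0∞)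
    (hD : Measurable D) (hD1 : ∀ x, D x ≤ 1) :
    ∫⁻ x, negLog (P.rnDeriv (P + Q) x) ∂P
        + ∫⁻ x, negLog (1 - P.rnDeriv (P + Q) x) ∂Q
      ≤ ∫⁻ x, negLog (D x) ∂P + ∫⁻ x, negLog (1 - D x) ∂Q :=
  adversarial_Z_optimal_discriminator_general dZ dX μ G E P Q hP hQ D hD hD1
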